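/- arXiv:2503.18493 — 3 statements merged into one kernel-verified Lean document; each statement's English description precedes it below -/
import Mathlib

section
/- Let λ ≥ 1, m ≥ 0, and t ≥ 1 be integers. Then for every integer n ≥ 0, the generalized overcubic partition function satisfies a̅_{2^λ m + t}(n) ≡ a̅_t(n) (mod 2^{λ+1}). -/
/-- The infinite product `(q^h; q^h)_∞ = ∏_{k ≥ 0} (1 - q^{h(k+1)})` as a formal power
series over `R`.  Since the factor `1 - q^{h(k+1)}` only affects coefficients of
degree `≥ k + 1`, the coefficient of `qⁿ` is that of the finite truncated product
over `k < n + 1`. -/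
noncomputable def qPochInf (R : Type*) [CommRing R] (h : ℕ) : PowerSeries R :=
  PowerSeries.mk fun n =>
    PowerSeries.coeff (R := R) n
      (∏ k ∈ Finset.range (n + 1), (1 - PowerSeries.X ^ (h * (k + 1))))

/-- `abar` is the generalized overcubic partition family: for every `c ≥ 1`,
`∑_{n≥0} a̅_c(n) qⁿ = f₄^(c-1) / (f₁² f₂^(2c-3))`, stated multiplied out (both sides
multiplied by `f₁² f₂^(2c-3) · f₂³ = f₁² f₂^(2c) / f₂³`, i.e. as
`(∑ a̅_c(n) qⁿ) · f₁² · f₂^(2c) = f₄^(c-1) · f₂³`) so as to avoid the negative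
exponent `2c - 3 = -1` occurring when `c = 1`; this is equivalent since the `fₕ`
are units in the ring of formal power series. -/
def IsGenOvercubic (abar : ℕ → ℕ → ℕ) : Prop :=
  ∀ c : ℕ, 1 ≤ c →
    (PowerSeries.mk fun n => (abar c n : ℤ)) * qPochInf ℤ 1 ^ 2 * qPochInf ℤ 2 ^ (2 * c) =
      qPochInf ℤ 4 ^ (c - 1) * qPochInf ℤ 2 ^ 3

/-!
Write `fₕ = (qʰ; qʰ)_∞` and `G_c = ∑ a̅_c(n) qⁿ = f₄^(c-1) f₂³ / (f₁² f₂^(2c))`, so that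
`G_{c+d} = G_c · (f₄^d / f₂^(2d))`. Over `𝔽₂` the Frobenius gives `f₂² = f₄`, i.e. `f₂² ≡ f₄ (mod 2)`
over `ℤ`, and raising to the power `2^λ` lifts this to `f₂^(2^(λ+1)) ≡ f₄^(2^λ) (mod 2^(λ+1))`.
Hence modulo `2^(λ+1)` the family `G_c` is periodic in `c` with period `2^λ`.
-/

open PowerSeries Finset

namespace PowerSeries

variable {R : Type*} [CommRing R]

theorem C_dvd_iff_dvd_coeff (r : R) (f : R⟦X⟧) : C r ∣ f ↔ ∀ n, r ∣ coeff n f := by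
  constructor
  · rintro ⟨g, rfl⟩ n
    rw [coeff_C_mul]
    exact dvd_mul_right r _
  · intro h
    choose g hg using h
    exact ⟨mk g, by ext n; rw [coeff_C_mul, coeff_mk, hg]⟩

end PowerSeries

section qPochInf

variable {R : Type*} [CommRing R] {h : ℕ}

theorem coeff_qPochInf_eq_coeff_prod (hh : 0 < h) {n N : ℕ} (hn : n < N) :
    coeff n (qPochInf R h) = coeff n (∏ k ∈ range N, (1 - X ^ (h * (k + 1)) : R⟦X⟧)) := by
  induction N, hn using Nat.le_induction with
  | base => rw [qPochInf, coeff_mk]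
  | succ N hN ih =>
    have hlarge : ¬ h * (N + 1) ≤ n := by nlinarith
    rw [prod_range_succ, mul_sub, mul_one, map_sub, coeff_mul_X_pow', if_neg hlarge, sub_zero, ih]

theorem trunc_qPochInf (hh : 0 < h) {n N : ℕ} (hn : n ≤ N) :
    trunc n (qPochInf R h) = trunc n (∏ k ∈ range N, (1 - X ^ (h * (k + 1)) : R⟦X⟧)) := by
  ext i
  simp only [coeff_trunc]
  split_ifs with hi
  · exact coeff_qPochInf_eq_coeff_prod hh (by omega)
  · rfl

theorem map_qPochInf {S : Type*} [CommRing S] (φ : R →+* S) (h : ℕ) :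
    map φ (qPochInf R h) = qPochInf S h := by
  ext n
  simp only [qPochInf, coeff_map, coeff_mk, ← coeff_map φ, map_prod, map_sub, map_one, map_pow,
    map_X]

theorem isUnit_qPochInf (hh : 0 < h) : IsUnit (qPochInf R h) := by
  rw [isUnit_iff_constantCoeff, ← coeff_zero_eq_constantCoeff_apply,
    coeff_qPochInf_eq_coeff_prod hh zero_lt_one, prod_range_one, map_sub, coeff_X_pow,
    if_neg (by omega), sub_zero, coeff_zero_one]
  exact isUnit_one

theorem qPochInf_pow_char (p : ℕ) [Fact p.Prime] [CharP R p] (hh : 0 < h) :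
    qPochInf R h ^ p = qPochInf R (p * h) := by
  have : CharP R⟦X⟧ p := charP_of_injective_algebraMap (R := R) C_injective p
  have hph : 0 < p * h := Nat.mul_pos (Fact.out : p.Prime).pos hh
  ext n
  have hfrob : (∏ k ∈ range (n + 1), (1 - X ^ (h * (k + 1)) : R⟦X⟧)) ^ p =
      ∏ k ∈ range (n + 1), (1 - X ^ (p * h * (k + 1)) : R⟦X⟧) := by
    rw [← prod_pow]
    refine prod_congr rfl fun k _ => ?_
    rw [sub_pow_char, one_pow, ← pow_mul, mul_comm p h, mul_right_comm]
  rw [← coeff_coe_trunc_of_lt n.lt_succ_self, ← trunc_trunc_pow, trunc_qPochInf hh le_rfl,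
    trunc_trunc_pow, coeff_coe_trunc_of_lt n.lt_succ_self, hfrob,
    coeff_qPochInf_eq_coeff_prod hph n.lt_succ_self]

theorem natCast_dvd_qPochInf_int_pow_sub (p : ℕ) [Fact p.Prime] (hh : 0 < h) :
    (p : ℤ⟦X⟧) ∣ qPochInf ℤ h ^ p - qPochInf ℤ (p * h) := by
  rw [← map_natCast (C (R := ℤ)), C_dvd_iff_dvd_coeff]
  intro n
  rw [← ZMod.intCast_zmod_eq_zero_iff_dvd, ← eq_intCast (Int.castRingHom (ZMod p)), ← coeff_map,
    map_sub, map_pow, map_qPochInf, map_qPochInf, qPochInf_pow_char p hh, sub_self, map_zero]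

theorem qPochInf_pow_prime_pow_succ (p k : ℕ) [Fact p.Prime] (hh : 0 < h) :
    qPochInf (ZMod (p ^ (k + 1))) h ^ p ^ (k + 1) =
      qPochInf (ZMod (p ^ (k + 1))) (p * h) ^ p ^ k := by
  obtain ⟨e, he⟩ := dvd_sub_pow_of_dvd_sub (natCast_dvd_qPochInf_int_pow_sub p hh) k
  have := congrArg (map (Int.castRingHom (ZMod (p ^ (k + 1))))) he
  rwa [map_sub, map_pow, map_pow, map_pow, map_qPochInf, map_qPochInf, map_mul, map_pow,
    map_natCast, ← Nat.cast_pow, ← map_natCast C, ZMod.natCast_self, map_zero, zero_mul,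
    sub_eq_zero, ← pow_mul, ← pow_succ'] at this

end qPochInf

theorem IsGenOvercubic.mk_mul_eq {abar : ℕ → ℕ → ℕ} (habar : IsGenOvercubic abar)
    (R : Type*) [CommRing R] {c : ℕ} (hc : 1 ≤ c) :
    (mk fun n => (abar c n : R)) * qPochInf R 1 ^ 2 * qPochInf R 2 ^ (2 * c) =
      qPochInf R 4 ^ (c - 1) * qPochInf R 2 ^ 3 := by
  have := congrArg (map (Int.castRingHom R)) (habar c hc)
  simp only [map_mul, map_pow, map_qPochInf] at this
  convert this using 3
  ext n
  simp

theorem eq_of_genFun_relation {M : Type*} [CommMonoid M] {A : ℕ → M} {F₁ F₂ F₄ : M}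
    (hF₁ : IsUnit F₁) (hF₂ : IsUnit F₂)
    (hA : ∀ c, 1 ≤ c → A c * F₁ ^ 2 * F₂ ^ (2 * c) = F₄ ^ (c - 1) * F₂ ^ 3)
    {d : ℕ} (hd : F₄ ^ d = F₂ ^ (2 * d)) (m : ℕ) {t : ℕ} (ht : 1 ≤ t) :
    A (d * m + t) = A t := by
  have hstep : ∀ c, 1 ≤ c → A (c + d) = A c := by
    intro c hc
    refine (((hF₁.pow 2).mul (hF₂.pow (2 * c))).mul (hF₂.pow (2 * d))).mul_right_cancel ?_
    calc A (c + d) * (F₁ ^ 2 * F₂ ^ (2 * c) * F₂ ^ (2 * d))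
        = A (c + d) * F₁ ^ 2 * F₂ ^ (2 * (c + d)) := by rw [mul_add, pow_add]; ac_rfl
      _ = F₄ ^ (c - 1) * F₄ ^ d * F₂ ^ 3 := by rw [hA _ (by omega), Nat.sub_add_comm hc, pow_add]
      _ = A c * F₁ ^ 2 * F₂ ^ (2 * c) * F₂ ^ (2 * d) := by rw [hd, mul_right_comm, ← hA c hc]
      _ = A c * (F₁ ^ 2 * F₂ ^ (2 * c) * F₂ ^ (2 * d)) := by ac_rfl
  induction m with
  | zero => simp
  | succ m ih => rw [mul_add_one, add_right_comm, hstep _ (by omega), ih]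

theorem overcubic_congr_two_pow_general (abar : ℕ → ℕ → ℕ) (habar : IsGenOvercubic abar)
    (lam m t : ℕ) (ht : 1 ≤ t) (n : ℕ) :
    abar (2 ^ lam * m + t) n ≡ abar t n [MOD 2 ^ (lam + 1)] := by
  have hperiod : qPochInf (ZMod (2 ^ (lam + 1))) 4 ^ 2 ^ lam =
      qPochInf (ZMod (2 ^ (lam + 1))) 2 ^ (2 * 2 ^ lam) := by
    rw [← pow_succ', qPochInf_pow_prime_pow_succ 2 lam two_pos]
    rfl
  have hgenFun := eq_of_genFun_relation (isUnit_qPochInf one_pos) (isUnit_qPochInf two_pos)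
    (fun c hc => habar.mk_mul_eq (ZMod (2 ^ (lam + 1))) hc) hperiod m ht
  rw [← ZMod.natCast_eq_natCast_iff]
  simpa using congrArg (coeff n) hgenFun

/-- For integers `λ ≥ 1`, `m ≥ 0`, `t ≥ 1` and every `n ≥ 0`,
`a̅_{2^λ m + t}(n) ≡ a̅_t(n) (mod 2^(λ+1))`. -/
theorem overcubic_congr_two_pow (abar : ℕ → ℕ → ℕ) (habar : IsGenOvercubic abar)
    (lam m t : ℕ) (hlam : 1 ≤ lam) (ht : 1 ≤ t) (n : ℕ) :
    abar (2 ^ lam * m + t) n ≡ abar t n [MOD 2 ^ (lam + 1)] :=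
  overcubic_congr_two_pow_general abar habar lam m t ht n
end

section
/- Let p ≥ 5 be a prime such that the Legendre symbol (−8/p) = −1, and let r be an integer with 1 ≤ r ≤ p−1. Then for all integers m ≥ 0, α ≥ 0 and n ≥ 0, the generalized overcubic partition function satisfies a̅_{2m+2}(8·p^{2α+1}(pn + r) + 3·p^{2α+2}) ≡ 0 (mod 8). -/
/-!
By Gauss's identity `f_h² = φ(-q^h) f_{2h}`, where `φ(-q) = ∑_{j ∈ ℤ} (-1)^j q^{j²}`, the generating
function of `a̅_{2m+2}` is `1 / (φ(-q) φ(-q²)^{2m+1})`.  Writing `φ(-q^h) = 1 + 2 T_h`, we have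
`(1 + 2 T_h)^4 ≡ 1 (mod 8)`, so modulo 8 the generating function is `φ(-q)^3 φ(-q²)^{6m+3}`, which
expands into a combination of `1, T_1, T_2, T_1², T_2², T_1 T_2`.  Their coefficients at `M` count
representations of `M` as `k², 2k², k² + l², 2k² + 2l², k² + 2l²`.  For `M ≡ 3 (mod 8)` the first
four are excluded by congruences, and for `M = p^{2α+1} K` with `p ∤ K` the last is excluded by
descent: `(-2/p) = -1` forces `p ∣ k` and `p ∣ l`.

Gauss's identity is the limit `n → ∞` of its finite form
`∑_{|j| ≤ n} (-1)^j q^{j²} [2n choose n+j]_{q²} = (q; q²)_n²`, proved by induction on `n`; the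
limit works because `[2n choose n+j]_{q²} (q²; q²)_n ≡ 1` modulo `q^{n - |j| + 1}`.
-/

open PowerSeries Finset

noncomputable section

namespace Overcubic

variable {R : Type*} [CommRing R]

theorem sum_Icc_add_of_support {M : Type*} [AddCommMonoid M] {f : ℤ → M} {a b : ℤ}
    (hf : ∀ j ∉ Icc a b, f j = 0) {a' b' c : ℤ} (ha : a' + c ≤ a) (hb : b ≤ b' + c) :
    ∑ j ∈ Icc a' b', f (j + c) = ∑ j ∈ Icc a b, f j := by
  have hshift : ∑ j ∈ Icc a' b', f (j + c) = ∑ j ∈ Icc (a' + c) (b' + c), f j := by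
    rw [← map_add_right_Icc, sum_map]
    rfl
  rw [hshift]
  exact (sum_subset (Icc_subset_Icc ha hb) fun j _ hj => hf j hj).symm

theorem sum_Icc_neg_eq_add_sum_range {M : Type*} [AddCommMonoid M] (f : ℤ → M) (N : ℕ) :
    ∑ j ∈ Icc (-(N : ℤ)) N, f j = f 0 + ∑ k ∈ range N, (f (k + 1) + f (-(k + 1))) := by
  induction N with
  | zero => simp
  | succ N ih =>
    have hIcc : Icc (-((N + 1 : ℕ) : ℤ)) (N + 1 : ℕ) =
        insert (-(N : ℤ) - 1) (insert ((N : ℤ) + 1) (Icc (-(N : ℤ)) N)) := by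
      rw [insert_Icc_right_eq_Icc_add_one (by omega), insert_Icc_left_eq_Icc_sub_one (by omega)]
      push_cast
      ring_nf
    rw [hIcc, sum_insert (by simp only [mem_insert, mem_Icc]; omega), sum_insert (by simp), ih,
      sum_range_succ, neg_add', sub_eq_add_neg]
    abel

abbrev modXPow (d : ℕ) : R⟦X⟧ →+* R⟦X⟧ ⧸ Ideal.span {(X : R⟦X⟧) ^ d} := Ideal.Quotient.mk _

theorem modXPow_eq_iff {d : ℕ} {f g : R⟦X⟧} :
    modXPow d f = modXPow d g ↔ ∀ i < d, coeff i f = coeff i g := by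
  simp only [modXPow, Ideal.Quotient.mk_eq_mk_iff_sub_mem, Ideal.mem_span_singleton,
    X_pow_dvd_iff, map_sub, sub_eq_zero]

theorem modXPow_X_pow {d e : ℕ} (h : d ≤ e) : modXPow d (X ^ e : R⟦X⟧) = 0 :=
  Ideal.Quotient.eq_zero_iff_mem.2 (Ideal.mem_span_singleton.2 (pow_dvd_pow X h))

theorem modXPow_of_le {d e : ℕ} (h : d ≤ e) {f g : R⟦X⟧} (hfg : modXPow e f = modXPow e g) :
    modXPow d f = modXPow d g :=
  modXPow_eq_iff.2 fun i hi => modXPow_eq_iff.1 hfg i (hi.trans_le h)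

theorem modXPow_X_pow_mul {d e : ℕ} {f g : R⟦X⟧} (hfg : modXPow d f = modXPow d g) :
    modXPow (e + d) (X ^ e * f) = modXPow (e + d) (X ^ e * g) := by
  rw [Ideal.Quotient.mk_eq_mk_iff_sub_mem, Ideal.mem_span_singleton, ← mul_sub, pow_add]
  exact mul_dvd_mul_left _ (Ideal.mem_span_singleton.1 (Ideal.Quotient.eq.1 hfg))

theorem eq_of_forall_modXPow {f g : R⟦X⟧} (h : ∀ d, modXPow d f = modXPow d g) : f = g :=
  ext fun n => modXPow_eq_iff.1 (h (n + 1)) n n.lt_succ_self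

theorem X_pow_toNat_mul_X_pow_toNat {a b : ℤ} (ha : 0 ≤ a) (hb : 0 ≤ b) :
    (X : R⟦X⟧) ^ a.toNat * X ^ b.toNat = X ^ (a + b).toNat := by
  rw [← pow_add, Int.toNat_add ha hb]

theorem X_pow_toNat_mul_X_pow_toNat_eq {a b c d : ℤ} (ha : 0 ≤ a) (hb : 0 ≤ b) (hc : 0 ≤ c)
    (hd : 0 ≤ d) (h : a + b = c + d) :
    (X : R⟦X⟧) ^ a.toNat * X ^ b.toNat = X ^ c.toNat * X ^ d.toNat := by
  rw [X_pow_toNat_mul_X_pow_toNat ha hb, X_pow_toNat_mul_X_pow_toNat hc hd, h]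

variable (R) in
def qPochFin (h N : ℕ) : R⟦X⟧ := ∏ k ∈ range N, (1 - X ^ (h * (k + 1)))

theorem qPochFin_zero (h : ℕ) : qPochFin R h 0 = 1 := prod_range_zero _

theorem qPochFin_succ (h N : ℕ) :
    qPochFin R h (N + 1) = qPochFin R h N * (1 - X ^ (h * (N + 1))) :=
  prod_range_succ _ _

theorem isUnit_qPochFin {h : ℕ} (hh : 0 < h) (N : ℕ) : IsUnit (qPochFin R h N) := by
  refine isUnit_iff_constantCoeff.2 ?_
  simp only [qPochFin, map_prod, map_sub, map_one, map_pow, constantCoeff_X]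
  rw [prod_eq_one fun k _ => by rw [zero_pow (by positivity), sub_zero]]
  exact isUnit_one

theorem modXPow_qPochFin_of_le {h : ℕ} (hh : 0 < h) {d a b : ℕ} (had : d ≤ a + 1) (hab : a ≤ b) :
    modXPow d (qPochFin R h b) = modXPow d (qPochFin R h a) := by
  have htail : modXPow d (∏ k ∈ Ico a b, (1 - X ^ (h * (k + 1))) : R⟦X⟧) = 1 := by
    refine (map_prod _ _ _).trans (prod_eq_one fun k hk => ?_)
    rw [map_sub, map_one, modXPow_X_pow, sub_zero]
    nlinarith [(mem_Ico.1 hk).1]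
  rw [qPochFin, ← prod_range_mul_prod_Ico _ hab, map_mul, htail, mul_one]
  rfl

theorem modXPow_qPochFin {h : ℕ} (hh : 0 < h) {d a b : ℕ} (ha : d ≤ a + 1) (hb : d ≤ b + 1) :
    modXPow d (qPochFin R h a) = modXPow d (qPochFin R h b) := by
  rcases le_total a b with hab | hba
  · exact (modXPow_qPochFin_of_le hh ha hab).symm
  · exact modXPow_qPochFin_of_le hh hb hba

theorem modXPow_qPochInf {h : ℕ} (hh : 0 < h) {d N : ℕ} (hN : d ≤ N + 1) :
    modXPow d (qPochInf R h) = modXPow d (qPochFin R h N) :=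
  modXPow_eq_iff.2 fun i hi => by
    rw [qPochInf, coeff_mk]
    exact modXPow_eq_iff.1 (modXPow_qPochFin (R := R) (d := i + 1) (a := i + 1) (b := N) hh
      (by omega) (by omega)) i i.lt_succ_self

theorem isUnit_qPochInf {h : ℕ} (hh : 0 < h) : IsUnit (qPochInf R h) := by
  have h0 := modXPow_eq_iff.1 (modXPow_qPochInf (R := R) hh (N := 0) le_rfl) 0 one_pos
  rw [isUnit_iff_constantCoeff, ← coeff_zero_eq_constantCoeff_apply, h0]
  simp [qPochFin]

theorem map_qPochInf {S : Type*} [CommRing S] (f : R →+* S) (h : ℕ) :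
    PowerSeries.map f (qPochInf R h) = qPochInf S h := by
  ext n
  rw [qPochInf, qPochInf, coeff_map, coeff_mk, coeff_mk, ← coeff_map, map_prod]
  simp

variable (R) in
/-- The Gaussian binomial coefficient `[m choose k]` in the variable `X ^ g`.  The lower index is
an integer, and the coefficient vanishes for `k ∉ [0, m]`, so that sums over it shift freely. -/
def gaussBinom (g : ℕ) : ℕ → ℤ → R⟦X⟧
  | 0, k => if k = 0 then 1 else 0
  | m + 1, k => gaussBinom g m (k - 1) + X ^ (g * k).toNat * gaussBinom g m k

section gaussBinom

variable {g : ℕ}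

theorem gaussBinom_succ (m : ℕ) (k : ℤ) :
    gaussBinom R g (m + 1) k = gaussBinom R g m (k - 1) + X ^ (g * k).toNat * gaussBinom R g m k :=
  rfl

theorem gaussBinom_of_neg : ∀ (m : ℕ) {k : ℤ}, k < 0 → gaussBinom R g m k = 0
  | 0, _, hk => if_neg hk.ne
  | m + 1, k, hk => by
    rw [gaussBinom_succ, gaussBinom_of_neg m (by omega), gaussBinom_of_neg m hk, mul_zero,
      add_zero]

theorem gaussBinom_of_lt : ∀ (m : ℕ) {k : ℤ}, m < k → gaussBinom R g m k = 0
  | 0, _, hk => if_neg hk.ne'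
  | m + 1, k, hk => by
    rw [gaussBinom_succ, gaussBinom_of_lt m (by omega), gaussBinom_of_lt m (by omega), mul_zero,
      add_zero]

theorem gaussBinom_zero_right : ∀ m : ℕ, gaussBinom R g m 0 = 1
  | 0 => if_pos rfl
  | m + 1 => by rw [gaussBinom_succ, gaussBinom_of_neg m (by omega), gaussBinom_zero_right m]; simp

theorem gaussBinom_self : ∀ m : ℕ, gaussBinom R g m m = 1
  | 0 => if_pos rfl
  | m + 1 => by
    rw [gaussBinom_succ, Nat.cast_succ, add_sub_cancel_right, gaussBinom_self m,
      gaussBinom_of_lt m (by omega), mul_zero, add_zero]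

theorem gaussBinom_mul_qPochFin_mul_qPochFin : ∀ {m k : ℕ}, k ≤ m →
    gaussBinom R g m k * qPochFin R g k * qPochFin R g (m - k) = qPochFin R g m
  | 0, 0, _ => by simp [gaussBinom_zero_right, qPochFin_zero]
  | m + 1, 0, _ => by simp [gaussBinom_zero_right, qPochFin_zero]
  | m + 1, k + 1, hk => by
    rcases (Nat.le_of_succ_le_succ hk).eq_or_lt with rfl | hkm
    · rw [Nat.sub_self, qPochFin_zero, mul_one, gaussBinom_self, one_mul]
    have ih₁ := gaussBinom_mul_qPochFin_mul_qPochFin hkm.le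
    have ih₂ := gaussBinom_mul_qPochFin_mul_qPochFin (show k + 1 ≤ m from hkm)
    have hexp : ((g : ℤ) * ((k + 1 : ℕ) : ℤ)).toNat = g * (k + 1) := by
      rw [← Nat.cast_mul, Int.toNat_natCast]
    obtain ⟨l, hl⟩ : ∃ l, m - k = l + 1 := ⟨m - k - 1, by omega⟩
    rw [show m - (k + 1) = l by omega] at ih₂
    rw [hl, qPochFin_succ] at ih₁
    rw [Nat.add_sub_add_right, hl, qPochFin_succ, qPochFin_succ, qPochFin_succ, gaussBinom_succ,
      hexp, Nat.cast_succ, add_sub_cancel_right]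
    rw [qPochFin_succ, Nat.cast_succ] at ih₂
    have hw : (X : R⟦X⟧) ^ (g * (m + 1)) = X ^ (g * (k + 1)) * X ^ (g * (l + 1)) := by
      rw [← pow_add, ← mul_add]; congr 2; omega
    rw [hw]
    linear_combination (1 - X ^ (g * (k + 1))) * ih₁ +
      X ^ (g * (k + 1)) * (1 - X ^ (g * (l + 1))) * ih₂

theorem gaussBinom_sub (hg : 0 < g) (m : ℕ) (k : ℤ) :
    gaussBinom R g m (m - k) = gaussBinom R g m k := by
  rcases lt_or_ge k 0 with hk | hk
  · rw [gaussBinom_of_neg m hk, gaussBinom_of_lt m (by omega)]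
  rcases lt_or_ge (m : ℤ) k with hmk | hkm
  · rw [gaussBinom_of_lt m hmk, gaussBinom_of_neg m (by omega)]
  lift k to ℕ using hk
  replace hkm : k ≤ m := by exact_mod_cast hkm
  have h₁ := gaussBinom_mul_qPochFin_mul_qPochFin (R := R) (g := g) hkm
  have h₂ := gaussBinom_mul_qPochFin_mul_qPochFin (R := R) (g := g) (Nat.sub_le m k)
  rw [Nat.sub_sub_self hkm, mul_assoc, ← h₁, mul_assoc, mul_comm (qPochFin R g _)] at h₂
  rw [← Nat.cast_sub hkm]
  exact ((isUnit_qPochFin hg k).mul (isUnit_qPochFin hg (m - k))).mul_left_injective h₂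

theorem gaussBinom_succ' (hg : 0 < g) (m : ℕ) (k : ℤ) :
    gaussBinom R g (m + 1) k =
      gaussBinom R g m k + X ^ (g * (m + 1 - k)).toNat * gaussBinom R g m (k - 1) := by
  rw [← gaussBinom_sub hg (m + 1) k, gaussBinom_succ,
    show ((m + 1 : ℕ) : ℤ) - k - 1 = m - k by push_cast; ring, gaussBinom_sub hg,
    show ((m + 1 : ℕ) : ℤ) - k = m - (k - 1) by push_cast; ring, gaussBinom_sub hg,
    sub_sub_eq_add_sub]

theorem gaussBinom_add_two (hg : 0 < g) (m : ℕ) (k : ℤ) :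
    gaussBinom R g (m + 2) (k + 1) =
      (1 + X ^ (g * (m + 1))) * gaussBinom R g m k +
        X ^ (g * (m + 1 - k)).toNat * gaussBinom R g m (k - 1) +
        X ^ (g * (k + 1)).toNat * gaussBinom R g m (k + 1) := by
  have hmid : X ^ (g * (m + 1 - k)).toNat * (X ^ (g * k).toNat * gaussBinom R g m k) =
      X ^ (g * (m + 1)) * gaussBinom R g m k := by
    rcases lt_or_ge k 0 with hk | hk
    · simp [gaussBinom_of_neg m hk]
    rcases lt_or_ge (m : ℤ) k with hkm | hkm
    · simp [gaussBinom_of_lt m hkm]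
    rw [← mul_assoc, X_pow_toNat_mul_X_pow_toNat (by nlinarith) (by positivity)]
    congr 2
    rw [← Int.toNat_natCast (g * (m + 1))]
    push_cast
    ring_nf
  rw [gaussBinom_succ' hg, gaussBinom_succ, gaussBinom_succ, add_sub_cancel_right,
    show ((m + 1 : ℕ) : ℤ) + 1 - (k + 1) = m + 1 - k by push_cast; ring]
  linear_combination hmid

end gaussBinom

variable (R) in
def gaussTerm (h n : ℕ) (j : ℤ) : R⟦X⟧ :=
  ((j.negOnePow : ℤ) : R⟦X⟧) * X ^ (h * j ^ 2).toNat * gaussBinom R (2 * h) (2 * n) (n + j)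

section gaussTerm

variable {h : ℕ}

theorem gaussTerm_of_notMem {n : ℕ} {j : ℤ} (hj : j ∉ Icc (-(n : ℤ)) n) :
    gaussTerm R h n j = 0 := by
  rw [mem_Icc, not_and_or, not_le, not_le] at hj
  rcases hj with hj | hj
  · rw [gaussTerm, gaussBinom_of_neg _ (by omega), mul_zero]
  · rw [gaussTerm, gaussBinom_of_lt _ (by push_cast; omega), mul_zero]

theorem gaussTerm_succ (hh : 0 < h) (n : ℕ) (j : ℤ) :
    gaussTerm R h (n + 1) j = (1 + (X ^ (h * (2 * n + 1))) ^ 2) * gaussTerm R h n j -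
      X ^ (h * (2 * n + 1)) * (gaussTerm R h n (j - 1) + gaussTerm R h n (j + 1)) := by
  have hE : ((h * (2 * n + 1) : ℕ) : ℤ).toNat = h * (2 * n + 1) := Int.toNat_natCast _
  -- `h j² + 2h (n + 1 ∓ j) = h (2n + 1) + h (j ∓ 1)²`
  have hlow : X ^ (h * j ^ 2).toNat *
        (X ^ (2 * h * (2 * n + 1 - (n + j))).toNat * gaussBinom R (2 * h) (2 * n) (n + j - 1)) =
      X ^ (h * (2 * n + 1)) *
        (X ^ (h * (j - 1) ^ 2).toNat * gaussBinom R (2 * h) (2 * n) (n + (j - 1))) := by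
    rcases lt_or_ge (n + 1 : ℤ) j with hj | hj
    · simp [gaussBinom_of_lt (2 * n) (k := n + j - 1) (by push_cast; omega),
        show (n : ℤ) + (j - 1) = n + j - 1 by ring]
    rw [← mul_assoc, ← mul_assoc, show (n : ℤ) + (j - 1) = n + j - 1 by ring]
    congr 1
    rw [← hE]
    exact X_pow_toNat_mul_X_pow_toNat_eq (by positivity) (by nlinarith) (by positivity)
      (by positivity) (by push_cast; ring)
  have hhigh : X ^ (h * j ^ 2).toNat *
        (X ^ (2 * h * (n + j + 1)).toNat * gaussBinom R (2 * h) (2 * n) (n + j + 1)) =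
      X ^ (h * (2 * n + 1)) *
        (X ^ (h * (j + 1) ^ 2).toNat * gaussBinom R (2 * h) (2 * n) (n + (j + 1))) := by
    rcases lt_or_ge (n + j + 1 : ℤ) 0 with hj | hj
    · simp [gaussBinom_of_neg (2 * n) hj, show (n : ℤ) + (j + 1) = n + j + 1 by ring]
    rw [← mul_assoc, ← mul_assoc, show (n : ℤ) + (j + 1) = n + j + 1 by ring]
    congr 1
    rw [← hE]
    exact X_pow_toNat_mul_X_pow_toNat_eq (by positivity) (by nlinarith) (by positivity)
      (by positivity) (by push_cast; ring)
  rw [gaussTerm, gaussTerm, gaussTerm, gaussTerm, show 2 * (n + 1) = 2 * n + 2 by ring,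
    show ((n + 1 : ℕ) : ℤ) + j = n + j + 1 by push_cast; ring, gaussBinom_add_two (by omega),
    Int.negOnePow_sub, Int.negOnePow_succ, Int.negOnePow_one]
  push_cast
  linear_combination ((j.negOnePow : ℤ) : R⟦X⟧) * (hlow + hhigh)

end gaussTerm

variable (R) in
def gaussSum (h n : ℕ) : R⟦X⟧ := ∑ j ∈ Icc (-(n : ℤ)) n, gaussTerm R h n j

section gaussSum

variable {h : ℕ}

theorem gaussSum_succ (hh : 0 < h) (n : ℕ) :
    gaussSum R h (n + 1) = (1 - X ^ (h * (2 * n + 1))) ^ 2 * gaussSum R h n := by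
  have hshift (c : ℤ) (hc₁ : -1 ≤ c) (hc₂ : c ≤ 1) :
      ∑ j ∈ Icc (-((n + 1 : ℕ) : ℤ)) (n + 1 : ℕ), gaussTerm R h n (j + c) = gaussSum R h n :=
    sum_Icc_add_of_support (fun _ hj => gaussTerm_of_notMem hj) (by push_cast; omega)
      (by push_cast; omega)
  have h₀ := hshift 0 (by norm_num) (by norm_num)
  have h₁ := hshift (-1) (by norm_num) (by norm_num)
  have h₂ := hshift 1 (by norm_num) (by norm_num)
  simp only [add_zero, ← sub_eq_add_neg] at h₀ h₁
  rw [gaussSum, sum_congr rfl fun j _ => gaussTerm_succ hh n j, sum_sub_distrib, ← mul_sum,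
    ← mul_sum, sum_add_distrib, h₀, h₁, h₂]
  ring

theorem gaussSum_eq (hh : 0 < h) (n : ℕ) :
    gaussSum R h n = (∏ k ∈ range n, (1 - X ^ (h * (2 * k + 1)))) ^ 2 := by
  induction n with
  | zero => simp [gaussSum, gaussTerm, gaussBinom]
  | succ n ih => rw [gaussSum_succ hh, ih, prod_range_succ]; ring

theorem qPochFin_two_mul (h N : ℕ) :
    qPochFin R h (2 * N) = (∏ k ∈ range N, (1 - X ^ (h * (2 * k + 1)))) * qPochFin R (2 * h) N := by
  induction N with
  | zero => simp [qPochFin_zero]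
  | succ N ih =>
    rw [show 2 * (N + 1) = 2 * N + 1 + 1 by ring, qPochFin_succ, qPochFin_succ, ih,
      qPochFin_succ, prod_range_succ, show h * (2 * N + 1 + 1) = 2 * h * (N + 1) by ring]
    ring

end gaussSum

theorem modXPow_gaussBinom_mul_qPochFin {g : ℕ} (hg : 0 < g) {m k d N : ℕ} (hkm : k ≤ m)
    (hk : d ≤ k + 1) (hmk : d ≤ m - k + 1) (hN : d ≤ N + 1) :
    modXPow d (gaussBinom R g m k * qPochFin R g N) = 1 := by
  have hprod := congrArg (modXPow d) (gaussBinom_mul_qPochFin_mul_qPochFin (R := R) (g := g) hkm)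
  simp only [map_mul] at hprod
  rw [modXPow_qPochFin hg hk hN, modXPow_qPochFin hg hmk hN,
    modXPow_qPochFin hg (show d ≤ m + 1 by omega) hN] at hprod
  have hu : IsUnit (modXPow d (qPochFin R g N)) := (isUnit_qPochFin hg N).map _
  rw [map_mul]
  exact hu.mul_left_injective (by beta_reduce; rw [hprod, one_mul])

theorem modXPow_gaussSum_mul_qPochFin {h : ℕ} (hh : 0 < h) (N : ℕ) :
    modXPow N (gaussSum R h N * qPochFin R (2 * h) N) =
      modXPow N (∑ j ∈ Icc (-(N : ℤ)) N, ((j.negOnePow : ℤ) : R⟦X⟧) * X ^ (h * j ^ 2).toNat) := by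
  rw [gaussSum, sum_mul, map_sum, map_sum]
  refine sum_congr rfl fun j hj => ?_
  rw [mem_Icc] at hj
  obtain ⟨k, hk⟩ : ∃ k : ℕ, (N : ℤ) + j = k := ⟨(N + j).toNat, by omega⟩
  have hbinom := modXPow_gaussBinom_mul_qPochFin (R := R) (by omega : 0 < 2 * h)
    (m := 2 * N) (k := k) (d := N - j.natAbs + 1) (N := N) (by omega) (by omega) (by omega)
    (by omega)
  -- the factor `X ^ (h j²)` makes up for the `|j|` degrees of precision lost in `hbinom`
  have hexp : j.natAbs ≤ (h * j ^ 2).toNat := by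
    have : (j.natAbs : ℤ) ≤ h * j ^ 2 :=
      (Int.natAbs_le_self_sq j).trans (le_mul_of_one_le_left (sq_nonneg j) (by exact_mod_cast hh))
    omega
  rw [← map_one (modXPow (N - j.natAbs + 1))] at hbinom
  have hterm :=
    modXPow_of_le (d := N) (by omega) (modXPow_X_pow_mul (e := (h * j ^ 2).toNat) hbinom)
  rw [mul_one] at hterm
  rw [gaussTerm, hk, mul_assoc _ _ (qPochFin R _ N), mul_assoc, map_mul, hterm, ← map_mul]

variable (R) in
def thetaTailFin (h N : ℕ) : R⟦X⟧ := ∑ k ∈ range N, (-1) ^ (k + 1) * X ^ (h * (k + 1) ^ 2)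

variable (R) in
/-- `∑_{k ≥ 1} (-1)^k q^(h k²)`; as for `qPochInf`, the coefficient of `qⁿ` is read off a
partial sum. -/
def thetaTail (h : ℕ) : R⟦X⟧ := mk fun n => coeff n (thetaTailFin R h (n + 1))

variable (R) in
/-- Ramanujan's `φ(-q^h) = ∑_{j ∈ ℤ} (-1)^j q^(h j²)`. -/
def theta (h : ℕ) : R⟦X⟧ := 1 + 2 * thetaTail R h

section theta

variable {h : ℕ}

theorem modXPow_thetaTailFin_of_le (hh : 0 < h) {d a b : ℕ} (had : d ≤ a + 1) (hab : a ≤ b) :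
    modXPow d (thetaTailFin R h b) = modXPow d (thetaTailFin R h a) := by
  have htail : modXPow d (∑ k ∈ Ico a b, (-1) ^ (k + 1) * X ^ (h * (k + 1) ^ 2) : R⟦X⟧) = 0 := by
    refine (map_sum _ _ _).trans (sum_eq_zero fun k hk => ?_)
    rw [map_mul, modXPow_X_pow, mul_zero]
    nlinarith [(mem_Ico.1 hk).1]
  rw [thetaTailFin, ← sum_range_add_sum_Ico _ hab, map_add, htail, add_zero]
  rfl

theorem modXPow_thetaTail (hh : 0 < h) {d N : ℕ} (hN : d ≤ N + 1) :
    modXPow d (thetaTail R h) = modXPow d (thetaTailFin R h N) := by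
  refine modXPow_eq_iff.2 fun i hi => ?_
  rw [thetaTail, coeff_mk]
  rcases le_total (i + 1) N with hiN | hNi
  · exact modXPow_eq_iff.1
      (modXPow_thetaTailFin_of_le hh (d := i + 1) (a := i + 1) (by omega) hiN).symm i
      i.lt_succ_self
  · exact modXPow_eq_iff.1 (modXPow_thetaTailFin_of_le hh (d := i + 1) (by omega) hNi) i
      i.lt_succ_self

theorem sum_Icc_negOnePow_mul_X_pow (h N : ℕ) :
    ∑ j ∈ Icc (-(N : ℤ)) N, ((j.negOnePow : ℤ) : R⟦X⟧) * X ^ (h * j ^ 2).toNat =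
      1 + 2 * thetaTailFin R h N := by
  rw [sum_Icc_neg_eq_add_sum_range, thetaTailFin, mul_sum]
  congr 1
  · simp
  refine sum_congr rfl fun k _ => ?_
  have hexp : ((h : ℤ) * ((k : ℤ) + 1) ^ 2).toNat = h * (k + 1) ^ 2 := by
    rw [← Int.toNat_natCast (h * (k + 1) ^ 2)]
    push_cast
    rfl
  rw [neg_sq, hexp, Int.negOnePow_neg, ← Nat.cast_add_one, Int.coe_negOnePow_natCast]
  push_cast
  ring

theorem qPochInf_sq (hh : 0 < h) :
    qPochInf R h ^ 2 = theta R h * qPochInf R (2 * h) := by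
  refine eq_of_forall_modXPow fun N => ?_
  calc modXPow N (qPochInf R h ^ 2)
      = modXPow N (gaussSum R h N * qPochFin R (2 * h) N * qPochFin R (2 * h) N) := by
        rw [map_pow, modXPow_qPochInf hh (N := 2 * N) (by omega), ← map_pow, qPochFin_two_mul,
          gaussSum_eq hh]
        congr 1
        ring
    _ = modXPow N (theta R h * qPochInf R (2 * h)) := by
        rw [map_mul, modXPow_gaussSum_mul_qPochFin hh, sum_Icc_negOnePow_mul_X_pow, map_mul,
          modXPow_qPochInf (by omega) (N := N) (by omega), theta, map_add, map_add, map_mul,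
          map_mul, modXPow_thetaTail hh (N := N) (by omega)]

end theta

theorem coeff_thetaTail_eq_zero {h M : ℕ} (hM : ∀ k, M ≠ h * k ^ 2) :
    coeff M (thetaTail R h) = 0 := by
  rw [thetaTail, coeff_mk, thetaTailFin, map_sum]
  refine sum_eq_zero fun k _ => ?_
  rw [show ((-1) ^ (k + 1) : R⟦X⟧) = C ((-1) ^ (k + 1)) by simp, coeff_C_mul, coeff_X_pow,
    if_neg (hM (k + 1)), mul_zero]

theorem coeff_thetaTail_mul_thetaTail_eq_zero {h₁ h₂ M : ℕ}
    (hM : ∀ k l, M ≠ h₁ * k ^ 2 + h₂ * l ^ 2) :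
    coeff M (thetaTail R h₁ * thetaTail R h₂) = 0 := by
  rw [coeff_mul]
  refine sum_eq_zero fun ij hij => ?_
  rw [HasAntidiagonal.mem_antidiagonal] at hij
  by_cases hi : ∃ k, ij.1 = h₁ * k ^ 2
  · obtain ⟨k, hk⟩ := hi
    rw [coeff_thetaTail_eq_zero (h := h₂) fun l hl => hM k l (by omega), mul_zero]
  · rw [coeff_thetaTail_eq_zero (not_exists.1 hi), zero_mul]

theorem one_add_two_mul_pow (h8 : (8 : R) = 0) (b : R) (s : ℕ) :
    (1 + 2 * b) ^ s = 1 + 2 * s * b + 4 * s.choose 2 * b ^ 2 := by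
  induction s with
  | zero => simp
  | succ s ih =>
    rw [pow_succ, ih, Nat.choose_succ_succ, Nat.choose_one_right]
    push_cast
    linear_combination (s.choose 2 : R) * b ^ 3 * h8

theorem one_add_two_mul_pow_four (h8 : (8 : R) = 0) (b : R) : (1 + 2 * b) ^ 4 = 1 := by
  rw [one_add_two_mul_pow h8, show Nat.choose 4 2 = 6 by rfl]
  push_cast
  linear_combination (b + 3 * b ^ 2) * h8

theorem theta_pow_four (h8 : (8 : R) = 0) (h : ℕ) : theta R h ^ 4 = 1 :=
  one_add_two_mul_pow_four (by rw [← map_ofNat (C (R := R)) 8, h8, map_zero]) _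

theorem coeff_theta_pow_mul_theta_pow_eq_zero (h8 : (8 : R) = 0) {M : ℕ} (hM8 : M % 8 = 3)
    (hM : ∀ k l, M ≠ k ^ 2 + 2 * l ^ 2) (a b : ℕ) :
    coeff M (theta R 1 ^ a * theta R 2 ^ b) = 0 := by
  have h8' : (8 : R⟦X⟧) = 0 := by rw [← map_ofNat (C (R := R)) 8, h8, map_zero]
  have hsq (k l : ℕ) : M ≠ 1 * k ^ 2 + 1 * l ^ 2 := fun hkl => by
    have h3 : (k : ZMod 8) ^ 2 + (l : ZMod 8) ^ 2 = 3 := by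
      have hM' : (M : ZMod 8) = 3 := by rw [← ZMod.natCast_mod, hM8]; rfl
      rw [← hM', hkl]
      push_cast
      ring_nf
    exact (by decide : ∀ x y : ZMod 8, x ^ 2 + y ^ 2 ≠ 3) _ _ h3
  set T₁ := thetaTail R 1
  set T₂ := thetaTail R 2
  have hexpand : theta R 1 ^ a * theta R 2 ^ b =
      1 + C (2 * a : R) * T₁ + C (2 * b : R) * T₂ + C (4 * a.choose 2 : R) * (T₁ * T₁) +
        C (4 * b.choose 2 : R) * (T₂ * T₂) + C (4 * a * b : R) * (T₁ * T₂) := by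
    rw [theta, theta, one_add_two_mul_pow h8', one_add_two_mul_pow h8']
    simp only [map_mul, map_natCast, map_ofNat]
    linear_combination (a * b.choose 2 * T₁ * T₂ ^ 2 + a.choose 2 * b * T₁ ^ 2 * T₂ +
      2 * a.choose 2 * b.choose 2 * T₁ ^ 2 * T₂ ^ 2 : R⟦X⟧) * h8'
  have hT₁ : coeff M T₁ = 0 := coeff_thetaTail_eq_zero fun k hk => hsq k 0 (by simpa using hk)
  have hT₂ : coeff M T₂ = 0 := coeff_thetaTail_eq_zero fun k hk => by omega
  have hT₁₁ : coeff M (T₁ * T₁) = 0 := coeff_thetaTail_mul_thetaTail_eq_zero hsq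
  have hT₂₂ : coeff M (T₂ * T₂) = 0 := coeff_thetaTail_mul_thetaTail_eq_zero fun k l hkl => by omega
  have hT₁₂ : coeff M (T₁ * T₂) = 0 :=
    coeff_thetaTail_mul_thetaTail_eq_zero fun k l hkl => hM k l (by simpa using hkl)
  rw [hexpand]
  simp only [map_add, coeff_C_mul, coeff_one, if_neg (show M ≠ 0 by omega), hT₁, hT₂, hT₁₁, hT₂₂,
    hT₁₂, mul_zero, add_zero]

theorem overcubic_mul_theta_mul_theta_pow {abar : ℕ → ℕ → ℕ} (habar : IsGenOvercubic abar)
    (m : ℕ) :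
    PowerSeries.map (Int.castRingHom R) (mk fun n => (abar (2 * m + 2) n : ℤ)) *
      theta R 1 * theta R 2 ^ (2 * m + 1) = 1 := by
  have h := congrArg (PowerSeries.map (Int.castRingHom R)) (habar (2 * m + 2) (by omega))
  simp only [map_mul, map_pow, map_qPochInf, show 2 * m + 2 - 1 = 2 * m + 1 by omega] at h
  have g₁ : qPochInf R 1 ^ 2 = theta R 1 * qPochInf R 2 := qPochInf_sq one_pos
  have g₂ : qPochInf R 2 ^ 2 = theta R 2 * qPochInf R 4 := qPochInf_sq two_pos
  set A := PowerSeries.map (Int.castRingHom R) (mk fun n => (abar (2 * m + 2) n : ℤ))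
  set θ₁ := theta R 1
  set θ₂ := theta R 2
  clear_value A θ₁ θ₂
  have hθ₂ : IsUnit θ₂ :=
    isUnit_of_mul_isUnit_left (g₂ ▸ (isUnit_qPochInf (R := R) two_pos).pow 2)
  have hu : IsUnit (qPochInf R 2 * θ₂ * qPochInf R 4 ^ (2 * m + 2)) :=
    ((isUnit_qPochInf two_pos).mul hθ₂).mul ((isUnit_qPochInf (by norm_num)).pow _)
  refine hu.mul_left_injective ?_
  beta_reduce
  calc A * θ₁ * θ₂ ^ (2 * m + 1) * (qPochInf R 2 * θ₂ * qPochInf R 4 ^ (2 * m + 2))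
      = A * (θ₁ * qPochInf R 2) * (θ₂ * qPochInf R 4) ^ (2 * m + 2) := by ring
    _ = A * qPochInf R 1 ^ 2 * qPochInf R 2 ^ (2 * (2 * m + 2)) := by rw [← g₁, ← g₂, ← pow_mul]
    _ = qPochInf R 2 * qPochInf R 2 ^ 2 * qPochInf R 4 ^ (2 * m + 1) := by rw [h]; ring
    _ = 1 * (qPochInf R 2 * θ₂ * qPochInf R 4 ^ (2 * m + 2)) := by rw [g₂]; ring

theorem overcubic_eq_theta_pow_mul_theta_pow (h8 : (8 : R) = 0) {abar : ℕ → ℕ → ℕ}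
    (habar : IsGenOvercubic abar) (m : ℕ) :
    PowerSeries.map (Int.castRingHom R) (mk fun n => (abar (2 * m + 2) n : ℤ)) =
      theta R 1 ^ 3 * theta R 2 ^ (3 * (2 * m + 1)) := by
  have hA := overcubic_mul_theta_mul_theta_pow (R := R) habar m
  set t := theta R 1 * theta R 2 ^ (2 * m + 1)
  have ht : t ^ 4 = 1 := by
    rw [mul_pow, ← pow_mul, mul_comm (2 * m + 1) 4, pow_mul, theta_pow_four h8, theta_pow_four h8,
      one_pow, one_mul]
  rw [mul_assoc] at hA
  calc _ = _ * t ^ 4 := by rw [ht, mul_one]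
    _ = t ^ 3 := by rw [pow_succ' t 3, ← mul_assoc, hA, one_mul]
    _ = _ := by rw [mul_pow, ← pow_mul, mul_comm (2 * m + 1)]

theorem dvd_and_dvd_of_dvd_sq_add_mul_sq {p : ℕ} [Fact p.Prime] {d : ℕ}
    (hd : legendreSym p (-d) = -1) {k l : ℕ} (h : p ∣ k ^ 2 + d * l ^ 2) : p ∣ k ∧ p ∣ l := by
  have hz : (p : ℤ) ∣ (k : ℤ) ^ 2 - (-d) * (l : ℤ) ^ 2 := by
    rw [neg_mul, sub_neg_eq_add]
    exact_mod_cast h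
  obtain ⟨hk, hl⟩ := legendreSym.prime_dvd_of_eq_neg_one hd hz
  exact ⟨Int.natCast_dvd_natCast.1 hk, Int.natCast_dvd_natCast.1 hl⟩

theorem sq_add_mul_sq_ne_pow_mul {p : ℕ} [Fact p.Prime] {d : ℕ} (hd : legendreSym p (-d) = -1)
    {K : ℕ} (hK : ¬ p ∣ K) (β : ℕ) : ∀ k l : ℕ, k ^ 2 + d * l ^ 2 ≠ p ^ (2 * β + 1) * K := by
  have hp := (Fact.out : p.Prime).pos
  have descent {k l N : ℕ} (h : k ^ 2 + d * l ^ 2 = p * N) :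
      ∃ k' l' : ℕ, p * (k' ^ 2 + d * l' ^ 2) = N := by
    obtain ⟨⟨k', rfl⟩, ⟨l', rfl⟩⟩ := dvd_and_dvd_of_dvd_sq_add_mul_sq hd (h ▸ dvd_mul_right p N)
    refine ⟨k', l', Nat.eq_of_mul_eq_mul_left hp ?_⟩
    rw [← h]
    ring
  induction β with
  | zero =>
    intro k l h
    obtain ⟨k', l', h'⟩ := descent (N := K) (by rw [h]; ring)
    exact hK ⟨_, h'.symm⟩
  | succ β ih =>
    intro k l h
    obtain ⟨k', l', h'⟩ := descent (N := p ^ (2 * β + 2) * K) (by rw [h]; ring)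
    exact ih k' l' (Nat.eq_of_mul_eq_mul_left hp (by rw [h']; ring))

theorem legendreSym_neg_two_of_neg_eight {p : ℕ} [Fact p.Prime] (hp : p ≠ 2)
    (h : legendreSym p (-8) = -1) : legendreSym p (-2) = -1 := by
  have h2 : ((2 : ℤ) : ZMod p) ≠ 0 := fun h2 => hp <|
    (Nat.prime_dvd_prime_iff_eq Fact.out Nat.prime_two).1
      (Int.natCast_dvd_natCast.1 ((ZMod.intCast_zmod_eq_zero_iff_dvd 2 p).1 h2))
  rwa [show (-8 : ℤ) = -2 * 2 ^ 2 by norm_num, legendreSym.mul, legendreSym.sq_one' p h2,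
    mul_one] at h

theorem sq_mod_eight_of_odd {x : ℕ} (hx : Odd x) : x ^ 2 % 8 = 1 := by
  obtain ⟨y, rfl⟩ := hx
  obtain ⟨z, hz⟩ := Nat.even_mul_succ_self y
  have : (2 * y + 1) ^ 2 = 8 * z + 1 := by nlinarith
  omega

theorem eight_mul_add_three_mul_pow_mod_eight {p : ℕ} (hp : Odd p) (x α : ℕ) :
    (8 * x + 3 * p ^ (2 * α + 2)) % 8 = 3 := by
  have hsq := sq_mod_eight_of_odd (hp.pow (n := α + 1))
  rw [← pow_mul, mul_comm (α + 1), mul_add_one] at hsq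
  omega

theorem not_dvd_eight_mul_add {p : ℕ} (hp : p.Prime) (hp2 : p ≠ 2) {r : ℕ} (hr1 : 1 ≤ r)
    (hr2 : r < p) (n : ℕ) : ¬ p ∣ 8 * (p * n + r) + 3 * p := fun h => by
  rw [show 8 * (p * n + r) + 3 * p = 2 ^ 3 * r + p * (8 * n + 3) by ring,
    Nat.dvd_add_left (dvd_mul_right p _)] at h
  rcases hp.dvd_mul.1 h with h2 | hr
  · exact hp2 ((Nat.prime_dvd_prime_iff_eq hp Nat.prime_two).1 (hp.dvd_of_dvd_pow h2))
  · exact absurd (Nat.le_of_dvd hr1 hr) (by omega)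

end Overcubic

end

open Overcubic in
/-- Let `p ≥ 5` be a prime with Legendre symbol `(-8/p) = -1` and `1 ≤ r ≤ p - 1`.
Then for all `m, α, n ≥ 0`,
`a̅_{2m+2}(8 p^(2α+1)(pn + r) + 3 p^(2α+2)) ≡ 0 (mod 8)`. -/
theorem overcubic_even_vanish_three_mod_eight (abar : ℕ → ℕ → ℕ)
    (habar : IsGenOvercubic abar)
    (p : ℕ) (hp : p.Prime) (hp5 : 5 ≤ p) (hleg : @legendreSym p ⟨hp⟩ (-8) = -1)
    (r : ℕ) (hr1 : 1 ≤ r) (hr2 : r ≤ p - 1) (m α n : ℕ) :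
    abar (2 * m + 2) (8 * p ^ (2 * α + 1) * (p * n + r) + 3 * p ^ (2 * α + 2)) ≡ 0 [MOD 8] := by
  have : Fact p.Prime := ⟨hp⟩
  have hp2 : p ≠ 2 := by omega
  set M := 8 * p ^ (2 * α + 1) * (p * n + r) + 3 * p ^ (2 * α + 2) with hM
  have hM8 : M % 8 = 3 := by
    rw [hM, mul_assoc]
    exact eight_mul_add_three_mul_pow_mod_eight (hp.odd_of_ne_two hp2) _ α
  have hrep (k l : ℕ) : M ≠ k ^ 2 + 2 * l ^ 2 := fun h =>
    sq_add_mul_sq_ne_pow_mul (legendreSym_neg_two_of_neg_eight hp2 hleg)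
      (not_dvd_eight_mul_add hp hp2 hr1 (by omega) n) α k l (by rw [← h]; ring)
  have hcoeff := congrArg (coeff M)
    (overcubic_eq_theta_pow_mul_theta_pow (R := ZMod 8) rfl habar m)
  rw [coeff_theta_pow_mul_theta_pow_eq_zero rfl hM8 hrep, coeff_map, coeff_mk] at hcoeff
  exact Nat.modEq_zero_iff_dvd.2 ((ZMod.natCast_eq_zero_iff _ 8).1 (by exact_mod_cast hcoeff))
end

section
/- For all integers m ≥ 0 and n ≥ 0, the generalized overcubic partition function satisfies a̅_{2m+2}(8n + 7) ≡ 0 (mod 8). -/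
/-!
Write `θ_h = 1 + 2 * thetaTail ℤ h = 1 + 2 ∑_{k ≥ 1} (-1)^k q^{h k²}`. Gauss's identity
`f_h² = f_{2h} θ_h` turns the defining relation of `a̅_{2m+2}` into
`(∑ a̅_{2m+2}(n) qⁿ) θ_1 θ_2^(2m+1) = 1`. Modulo 8 we have `(1 + 2t)⁻¹ = 1 - 2t + 4t²` and
`(1 + 2s)^(2m+1) = (1 + 2s)(1 + 4m(s + s²))`, so the generating function is congruent to a
quadratic polynomial in `t = thetaTail 1` and `s = thetaTail 2`. The exponents occurring in it
are of the form `a²`, `2a²`, `a² + b²`, `a² + 2b²`, `2a² + 2b²`, and none of these is `≡ 7 (mod 8)`.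

Gauss's identity is the Jacobi triple product at `z = -1`. Its finite form follows from the
`q`-binomial theorem, and the limit is taken modulo `X^M`, where `[2n choose n + j]_Q (Q; Q)_n ≡ 1`
for `n` large and `j` small.
-/

open PowerSeries Finset

section

variable {R : Type*} [CommRing R]

def qPoch (u : R) (n : ℕ) : R := ∏ k ∈ range n, (1 - u ^ (k + 1))

theorem qPoch_succ (u : R) (n : ℕ) : qPoch u (n + 1) = qPoch u n * (1 - u ^ (n + 1)) :=
  prod_range_succ _ _

-- `qBinom Q k l` is the Gaussian binomial coefficient `[k + l choose k]_Q`.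
def qBinom (Q : R) : ℕ → ℕ → R
  | 0, _ => 1
  | _ + 1, 0 => 1
  | k + 1, l + 1 => qBinom Q k (l + 1) + Q ^ (k + 1) * qBinom Q (k + 1) l

@[simp] theorem qBinom_zero_left (Q : R) (l : ℕ) : qBinom Q 0 l = 1 := by simp [qBinom]
@[simp] theorem qBinom_zero_right (Q : R) (k : ℕ) : qBinom Q k 0 = 1 := by cases k <;> simp [qBinom]
theorem qBinom_succ_succ (Q : R) (k l : ℕ) :
    qBinom Q (k + 1) (l + 1) = qBinom Q k (l + 1) + Q ^ (k + 1) * qBinom Q (k + 1) l := by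
  rw [qBinom]

theorem qBinom_mul_qPoch_mul_qPoch (Q : R) (k l : ℕ) :
    qBinom Q k l * qPoch Q k * qPoch Q l = qPoch Q (k + l) := by
  induction k generalizing l with
  | zero => simp [qPoch]
  | succ k ihk =>
    induction l with
    | zero => simp [qPoch]
    | succ l ihl =>
      have h1 := ihk (l + 1)
      rw [show k + (l + 1) = k + l + 1 by omega, qPoch_succ Q l] at h1
      rw [show k + 1 + l = k + l + 1 by omega, qPoch_succ Q k] at ihl
      rw [qBinom_succ_succ, qPoch_succ Q k, qPoch_succ Q l,
        show k + 1 + (l + 1) = k + l + 1 + 1 by omega, qPoch_succ Q (k + l + 1)]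
      linear_combination (1 - Q ^ (k + 1)) * h1 + Q ^ (k + 1) * (1 - Q ^ (l + 1)) * ihl

theorem prod_add_mul_pow_eq_sum_antidiagonal (Q x y : R) (m : ℕ) :
    ∏ j ∈ range m, (y + x * Q ^ j) =
      ∑ p ∈ antidiagonal m, Q ^ p.1.choose 2 * qBinom Q p.1 p.2 * x ^ p.1 * y ^ p.2 := by
  induction m generalizing x with
  | zero => simp
  | succ m ih =>
    have hstep : ∏ j ∈ range (m + 1), (y + x * Q ^ j) =
        ∑ p ∈ antidiagonal m,
            Q ^ (p.1 + 1).choose 2 * qBinom Q p.1 p.2 * x ^ p.1 * y ^ (p.2 + 1) +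
          ∑ p ∈ antidiagonal m,
            Q ^ (p.1 + 1).choose 2 * qBinom Q p.1 p.2 * x ^ (p.1 + 1) * y ^ p.2 := by
      have hshift : ∏ j ∈ range m, (y + x * Q ^ (j + 1)) = ∏ j ∈ range m, (y + x * Q * Q ^ j) :=
        prod_congr rfl fun j _ => by ring
      rw [prod_range_succ', hshift, ih, mul_add, sum_mul, sum_mul, ← sum_add_distrib,
        ← sum_add_distrib]
      refine sum_congr rfl fun p _ => ?_
      rw [Nat.choose_succ_succ', Nat.choose_one_right]
      ring
    rw [hstep, Nat.sum_antidiagonal_succ]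
    cases m with
    | zero => simp
    | succ m =>
      rw [Nat.sum_antidiagonal_succ, Nat.sum_antidiagonal_succ', Nat.sum_antidiagonal_succ']
      have hpascal : ∑ p ∈ antidiagonal m, Q ^ (p.1 + 1).choose 2 *
            qBinom Q (p.1 + 1) (p.2 + 1) * x ^ (p.1 + 1) * y ^ (p.2 + 1) =
          ∑ p ∈ antidiagonal m, Q ^ (p.1 + 1 + 1).choose 2 * qBinom Q (p.1 + 1) p.2 *
            x ^ (p.1 + 1) * y ^ (p.2 + 1) +
          ∑ p ∈ antidiagonal m, Q ^ (p.1 + 1).choose 2 * qBinom Q p.1 (p.2 + 1) *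
            x ^ (p.1 + 1) * y ^ (p.2 + 1) := by
        rw [← sum_add_distrib]
        refine sum_congr rfl fun p _ => ?_
        rw [qBinom_succ_succ, Nat.choose_succ_succ' (p.1 + 1), Nat.choose_one_right]
        ring
      simp only [qBinom_zero_left, qBinom_zero_right]
      rw [hpascal]
      simp only [zero_add, Nat.choose_succ_self, pow_zero, mul_one, one_mul, Nat.choose_zero_succ]
      ring

theorem sq_pow_choose_two_mul_neg_sq_pow (u : R) (k : ℕ) :
    (u ^ 2) ^ k.choose 2 * (-u ^ 2) ^ k = (-1) ^ k * u ^ (k * (k + 1)) := by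
  induction k with
  | zero => simp
  | succ k ih =>
    rw [Nat.choose_succ_succ', Nat.choose_one_right, pow_add, pow_succ (-u ^ 2)]
    linear_combination (-u ^ 2) * (u ^ 2) ^ k * ih

theorem sum_range_two_mul_add_one {M : Type*} [AddCommMonoid M] (f : ℕ → M) (n : ℕ) :
    ∑ k ∈ range (2 * n + 1), f k = f n + ∑ j ∈ range n, (f (n + j + 1) + f (n - 1 - j)) := by
  rw [two_mul, add_assoc, sum_range_add, sum_range_succ', ← sum_range_reflect f n, sum_add_distrib]
  simp only [add_zero, add_assoc]
  abel

theorem prod_range_mul_pow (x Q : R) (k : ℕ) :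
    ∏ j ∈ range k, x * Q ^ j = Q ^ k.choose 2 * x ^ k := by
  induction k with
  | zero => simp
  | succ k ih =>
    rw [prod_range_succ, ih, Nat.choose_succ_succ', Nat.choose_one_right]
    ring

theorem prod_range_two_mul_pow_add_neg_sq_mul (u : R) (n : ℕ) :
    ∏ j ∈ range (2 * n), (u ^ (2 * n + 1) + -u ^ 2 * (u ^ 2) ^ j) =
      (-1) ^ n * u ^ (3 * n ^ 2 + 2 * n) * (∏ j ∈ range n, (1 - u ^ (2 * j + 1))) ^ 2 := by
  have hlow : ∀ j ∈ range n, u ^ (2 * n + 1) + -u ^ 2 * (u ^ 2) ^ j =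
      -u ^ 2 * (u ^ 2) ^ j * (1 - u ^ (2 * (n - 1 - j) + 1)) := fun j hj => by
    obtain ⟨d, rfl⟩ : ∃ d, n = j + 1 + d := ⟨n - j - 1, by simp at hj; omega⟩
    rw [show j + 1 + d - 1 - j = d by omega]
    ring
  have hhigh : ∀ j ∈ range n, u ^ (2 * n + 1) + -u ^ 2 * (u ^ 2) ^ (n + j) =
      u ^ (2 * n + 1) * (1 - u ^ (2 * j + 1)) := fun j _ => by ring
  rw [show range (2 * n) = range (n + n) by rw [two_mul], prod_range_add, prod_congr rfl hlow,
    prod_congr rfl hhigh, prod_mul_distrib, prod_range_mul_pow, sq_pow_choose_two_mul_neg_sq_pow,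
    prod_mul_distrib, prod_range_reflect (fun j => 1 - u ^ (2 * j + 1)), prod_const, card_range]
  ring

-- The `q`-binomial theorem at `Q = u²`, `x = -u²`, `y = u^(2n+1)`, divided by `(-1)ⁿ u^(3n²+2n)`.
theorem sq_prod_one_sub_odd_pow [IsDomain R] {u : R} (hu : u ≠ 0) (n : ℕ) :
    (∏ j ∈ range n, (1 - u ^ (2 * j + 1))) ^ 2 =
      qBinom (u ^ 2) n n + ∑ j ∈ range n, (-1) ^ (j + 1) * u ^ (j + 1) ^ 2 *
        (qBinom (u ^ 2) (n + j + 1) (n - 1 - j) + qBinom (u ^ 2) (n - 1 - j) (n + j + 1)) := by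
  have hc : (-1) ^ n * u ^ (3 * n ^ 2 + 2 * n) ≠ 0 := by simp [hu]
  refine mul_left_cancel₀ hc ?_
  have hR : ∑ p ∈ antidiagonal (2 * n),
        (u ^ 2) ^ p.1.choose 2 * qBinom (u ^ 2) p.1 p.2 * (-u ^ 2) ^ p.1 * (u ^ (2 * n + 1)) ^ p.2 =
      (-1) ^ n * u ^ (3 * n ^ 2 + 2 * n) * (qBinom (u ^ 2) n n +
        ∑ j ∈ range n, (-1) ^ (j + 1) * u ^ (j + 1) ^ 2 *
          (qBinom (u ^ 2) (n + j + 1) (n - 1 - j) + qBinom (u ^ 2) (n - 1 - j) (n + j + 1))) := by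
    rw [Nat.sum_antidiagonal_eq_sum_range_succ_mk, sum_range_two_mul_add_one, mul_add, mul_sum]
    simp only [mul_right_comm _ (qBinom _ _ _), sq_pow_choose_two_mul_neg_sq_pow]
    congr 1
    · rw [show 2 * n - n = n by omega]
      ring
    · refine sum_congr rfl fun j hj => ?_
      obtain ⟨d, rfl⟩ : ∃ d, n = j + 1 + d := ⟨n - j - 1, by simp at hj; omega⟩
      rw [show 2 * (j + 1 + d) - (j + 1 + d + j + 1) = d by omega,
        show 2 * (j + 1 + d) - (j + 1 + d - 1 - j) = j + 1 + d + j + 1 by omega,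
        show j + 1 + d - 1 - j = d by omega]
      have hsign : (-1 : R) ^ d = (-1) ^ (j + 1 + d) * (-1) ^ (j + 1) := by
        rw [← pow_add, show j + 1 + d + (j + 1) = 2 * (j + 1) + d by ring, pow_add, pow_mul,
          neg_one_sq, one_pow, one_mul]
      rw [hsign]
      ring
  rw [← prod_range_two_mul_pow_add_neg_sq_mul, prod_add_mul_pow_eq_sum_antidiagonal, hR]

local notation "π_[" M "]" => Ideal.Quotient.mk (Ideal.span {(X : PowerSeries _) ^ M})

theorem quotMk_X_pow_eq_iff {F G : R⟦X⟧} {M : ℕ} :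
    π_[M] F = π_[M] G ↔ ∀ j < M, coeff j F = coeff j G := by
  simp only [Ideal.Quotient.eq, Ideal.mem_span_singleton, X_pow_dvd_iff, map_sub, sub_eq_zero]

theorem quotMk_X_pow_eq_zero_iff {F : R⟦X⟧} {M : ℕ} : π_[M] F = 0 ↔ X ^ M ∣ F := by
  rw [Ideal.Quotient.eq_zero_iff_mem, Ideal.mem_span_singleton]

theorem eq_of_forall_quotMk_X_pow_eq {F G : R⟦X⟧} (h : ∀ M, π_[M] F = π_[M] G) : F = G := by
  ext n
  exact quotMk_X_pow_eq_iff.1 (h (n + 1)) n n.lt_succ_self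

theorem quotMk_qPoch_of_le {u : R⟦X⟧} (hu : X ∣ u) {M a b : ℕ} (hM : M ≤ a + 1) (hab : a ≤ b) :
    π_[M] (qPoch u b) = π_[M] (qPoch u a) := by
  obtain ⟨c, rfl⟩ := Nat.exists_eq_add_of_le hab
  have htail : ∀ i ∈ range c, π_[M] (1 - u ^ (a + i + 1)) = 1 := fun i _ => by
    rw [map_sub, map_one, sub_eq_self, quotMk_X_pow_eq_zero_iff]
    exact (pow_dvd_pow X (by omega)).trans (pow_dvd_pow_of_dvd hu _)
  rw [qPoch, prod_range_add, map_mul, map_prod (π_[M]) _ (range c), prod_congr rfl htail,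
    prod_const_one, mul_one, qPoch]

theorem isUnit_qPoch {u : R⟦X⟧} (hu : X ∣ u) (n : ℕ) : IsUnit (qPoch u n) := by
  rw [isUnit_iff_constantCoeff, qPoch, map_prod]
  simp [X_dvd_iff.1 hu]

theorem quotMk_qPochInf {h : ℕ} (hh : 0 < h) {M L : ℕ} (hML : M ≤ L) :
    π_[M] (qPochInf R h) = π_[M] (qPoch (X ^ h) L) := by
  have hX : (X : R⟦X⟧) ∣ X ^ h := dvd_pow_self X hh.ne'
  refine quotMk_X_pow_eq_iff.2 fun j hj => ?_
  have hdiag : coeff j (qPochInf R h) = coeff j (qPoch (X ^ h) (j + 1)) := by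
    simp only [qPochInf, coeff_mk, qPoch, pow_mul]
  rw [hdiag, quotMk_X_pow_eq_iff.1 (quotMk_qPoch_of_le hX le_rfl (Nat.le_succ j)) j j.lt_succ_self,
    quotMk_X_pow_eq_iff.1 (quotMk_qPoch_of_le hX le_rfl (show j ≤ L by omega)) j j.lt_succ_self]

theorem quotMk_qBinom_mul_qPoch {Q : R⟦X⟧} (hQ : X ∣ Q) {M a b c : ℕ} (ha : M ≤ a) (hb : M ≤ b)
    (hc : M ≤ c) : π_[M] (qBinom Q a b * qPoch Q c) = 1 := by
  have hstab : ∀ j, M ≤ j → π_[M] (qPoch Q j) = π_[M] (qPoch Q M) := fun j hj =>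
    quotMk_qPoch_of_le hQ (Nat.le_succ M) hj
  have hunit : IsUnit (π_[M] (qPoch Q M)) := (isUnit_qPoch hQ M).map _
  have hprod := congrArg π_[M] (qBinom_mul_qPoch_mul_qPoch Q a b)
  rw [map_mul, map_mul, hstab a ha, hstab b hb, hstab (a + b) (by omega)] at hprod
  rw [map_mul, hstab c hc]
  exact hunit.mul_left_cancel (by linear_combination hprod)

-- `1 + 2 * thetaTail R h` is the theta series `∑_{k ∈ ℤ} (-1)^k q^{h k²}`.
noncomputable def thetaTail (R : Type*) [CommRing R] (h : ℕ) : R⟦X⟧ :=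
  mk fun n => coeff n (∑ k ∈ range n, (-1) ^ (k + 1) * X ^ (h * (k + 1) ^ 2))

theorem coeff_neg_one_pow_mul_X_pow (n k e : ℕ) :
    coeff n ((-1 : R⟦X⟧) ^ k * X ^ e) = if n = e then (-1) ^ k else 0 := by
  rw [show (-1 : R⟦X⟧) ^ k = C ((-1) ^ k) by simp, coeff_C_mul_X_pow]

theorem coeff_thetaTail_eq_zero {h n : ℕ} (hn : ∀ k, n ≠ h * (k + 1) ^ 2) :
    coeff n (thetaTail R h) = 0 := by
  simp [thetaTail, coeff_neg_one_pow_mul_X_pow, hn]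

theorem map_thetaTail {S : Type*} [CommRing S] (f : R →+* S) (h : ℕ) :
    map f (thetaTail R h) = thetaTail S h := by
  ext n
  simp [thetaTail, coeff_neg_one_pow_mul_X_pow, apply_ite f]

theorem quotMk_thetaTail {h : ℕ} (hh : 0 < h) {M L : ℕ} (hML : M ≤ L) :
    π_[M] (thetaTail R h) = π_[M] (∑ k ∈ range L, (-1) ^ (k + 1) * X ^ (h * (k + 1) ^ 2)) := by
  refine quotMk_X_pow_eq_iff.2 fun j hj => ?_
  obtain ⟨c, rfl⟩ := Nat.exists_eq_add_of_le (show j ≤ L by omega)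
  have htail : ∀ i ∈ range c, coeff j ((-1 : R⟦X⟧) ^ (j + i + 1) * X ^ (h * (j + i + 1) ^ 2)) = 0 :=
    fun i _ => by
      have : j < h * (j + i + 1) ^ 2 := lt_of_lt_of_le (by omega)
        ((Nat.le_self_pow two_ne_zero _).trans (Nat.le_mul_of_pos_left _ hh))
      simp [coeff_neg_one_pow_mul_X_pow, this.ne]
  rw [thetaTail, coeff_mk, sum_range_add, map_add, map_sum (coeff j) _ (range c),
    sum_congr rfl htail, sum_const_zero, add_zero]

theorem qPoch_two_mul (u : R) (n : ℕ) :
    qPoch u (2 * n) = (∏ j ∈ range n, (1 - u ^ (2 * j + 1))) * qPoch (u ^ 2) n := by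
  induction n with
  | zero => simp [qPoch]
  | succ n ih =>
    rw [show 2 * (n + 1) = 2 * n + 1 + 1 by ring, qPoch_succ, qPoch_succ, ih, prod_range_succ,
      qPoch_succ]
    ring

theorem quotMk_sq_prod_one_sub_odd_pow_mul_qPoch [IsDomain R] {h : ℕ} (hh : 0 < h) {M n : ℕ}
    (hn : 2 * M ≤ n) :
    π_[M] ((∏ j ∈ range n, (1 - (X ^ h : R⟦X⟧) ^ (2 * j + 1))) ^ 2 * qPoch ((X ^ h) ^ 2) n) =
      π_[M] (1 + 2 * thetaTail R h) := by
  set u : R⟦X⟧ := X ^ h with hu_def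
  have hQ : X ∣ u ^ 2 := (dvd_pow_self X hh.ne').trans (dvd_pow_self u two_ne_zero)
  have htheta : π_[M] (thetaTail R h) =
      π_[M] (∑ j ∈ range n, (-1) ^ (j + 1) * u ^ (j + 1) ^ 2) := by
    simp only [quotMk_thetaTail hh (show M ≤ n by omega), hu_def, ← pow_mul]
  have hterm : ∀ j ∈ range n, π_[M] ((-1) ^ (j + 1) * u ^ (j + 1) ^ 2 *
      (qBinom (u ^ 2) (n + j + 1) (n - 1 - j) + qBinom (u ^ 2) (n - 1 - j) (n + j + 1)) *
        qPoch (u ^ 2) n) = π_[M] (2 * ((-1) ^ (j + 1) * u ^ (j + 1) ^ 2)) := fun j _ => by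
    by_cases hjM : j < M
    · rw [mul_assoc, add_mul, map_mul, map_add, quotMk_qBinom_mul_qPoch hQ (by omega) (by omega)
        (by omega), quotMk_qBinom_mul_qPoch hQ (by omega) (by omega) (by omega)]
      simp only [map_mul, map_ofNat]
      ring
    · have hvanish : π_[M] (u ^ (j + 1) ^ 2) = 0 := by
        rw [quotMk_X_pow_eq_zero_iff, hu_def, ← pow_mul]
        exact pow_dvd_pow X (by nlinarith)
      simp [hvanish]
  rw [sq_prod_one_sub_odd_pow (pow_ne_zero h X_ne_zero), add_mul, sum_mul, map_add, map_sum,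
    sum_congr rfl hterm, quotMk_qBinom_mul_qPoch hQ (by omega) (by omega) (by omega), map_add,
    map_one, map_mul, htheta, ← map_sum, ← map_mul, mul_sum]

theorem qPochInf_sq [IsDomain R] {h : ℕ} (hh : 0 < h) :
    qPochInf R h ^ 2 = qPochInf R (2 * h) * (1 + 2 * thetaTail R h) := by
  refine eq_of_forall_quotMk_X_pow_eq fun M => ?_
  have hf1 : π_[M] (qPochInf R h) = π_[M] ((∏ j ∈ range (2 * M),
      (1 - (X ^ h : R⟦X⟧) ^ (2 * j + 1))) * qPoch ((X ^ h) ^ 2) (2 * M)) := by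
    rw [quotMk_qPochInf hh (show M ≤ 2 * (2 * M) by omega), qPoch_two_mul]
  have hf2 : π_[M] (qPochInf R (2 * h)) = π_[M] (qPoch ((X ^ h) ^ 2) (2 * M)) := by
    rw [quotMk_qPochInf (by omega) (show M ≤ 2 * M by omega), ← pow_mul, mul_comm]
  rw [map_pow, hf1, map_mul, map_mul, hf2,
    ← quotMk_sq_prod_one_sub_odd_pow_mul_qPoch hh le_rfl, map_mul, map_pow]
  ring

theorem one_add_four_mul_pow (h8 : (8 : R) = 0) (y : R) (m : ℕ) :
    (1 + 4 * y) ^ m = 1 + 4 * m * y := by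
  induction m with
  | zero => simp
  | succ m ih =>
    rw [pow_succ, ih]
    push_cast
    linear_combination (2 * m * y ^ 2) * h8

theorem eq_of_mul_one_add_two_mul_mul_pow (h8 : (8 : R) = 0) {a t s : R} {m : ℕ}
    (h : a * (1 + 2 * t) * (1 + 2 * s) ^ (2 * m + 1) = 1) :
    a = 1 - 2 * t - 2 * s + 4 * (t ^ 2 + t * s + s ^ 2) - 4 * (m : R) * (s + s ^ 2) := by
  rw [pow_succ, pow_mul, show (1 + 2 * s) ^ 2 = 1 + 4 * (s + s ^ 2) by ring,
    one_add_four_mul_pow h8] at h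
  set w := s + s ^ 2
  -- `(1 + 2t)(1 - 2t + 4t²) = 1 + 8t³` and `(1 + 4mw)(1 - 4mw) = 1 - 16m²w²`
  linear_combination ((1 - 2 * t + 4 * t ^ 2) * (1 - 2 * s + 4 * s ^ 2) * (1 - 4 * m * w)) * h +
    (a * (-t ^ 3 - s ^ 3 - 8 * t ^ 3 * s ^ 3 +
        2 * m ^ 2 * w ^ 2 * (1 + 8 * t ^ 3) * (1 + 8 * s ^ 3)) +
      (-t * s ^ 2 - t ^ 2 * s + 2 * t ^ 2 * s ^ 2) * (1 - 4 * m * w) +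
      m * w * (t + s - 2 * t ^ 2 - 2 * t * s - 2 * s ^ 2)) * h8

theorem sq_add_sq_ne_eight_mul_add_seven (x y n : ℕ) :
    x ^ 2 + y ^ 2 ≠ 8 * n + 7 ∧ x ^ 2 + 2 * y ^ 2 ≠ 8 * n + 7 := by
  have hmod : ∀ a b : ZMod 8, a ^ 2 + b ^ 2 ≠ 7 ∧ a ^ 2 + 2 * b ^ 2 ≠ 7 := by decide
  have hcast : ((8 * n + 7 : ℕ) : ZMod 8) = 7 := by simp [show (8 : ZMod 8) = 0 from rfl]
  refine ⟨fun hxy => (hmod x y).1 ?_, fun hxy => (hmod x y).2 ?_⟩ <;>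
    · rw [← hcast, ← hxy]
      push_cast
      rfl

theorem coeff_thetaTail_mul_thetaTail_eq_zero {a b N : ℕ}
    (h : ∀ k l, N ≠ a * (k + 1) ^ 2 + b * (l + 1) ^ 2) :
    coeff N (thetaTail R a * thetaTail R b) = 0 := by
  rw [coeff_mul]
  refine sum_eq_zero fun p hp => ?_
  by_cases hk : ∃ k, p.1 = a * (k + 1) ^ 2
  · by_cases hl : ∃ l, p.2 = b * (l + 1) ^ 2
    · obtain ⟨k, hk⟩ := hk
      obtain ⟨l, hl⟩ := hl
      exact absurd (by rw [← hk, ← hl, (mem_antidiagonal.1 hp)]) (h k l)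
    · rw [coeff_thetaTail_eq_zero (not_exists.1 hl), mul_zero]
  · rw [coeff_thetaTail_eq_zero (not_exists.1 hk), zero_mul]

theorem coeff_eight_mul_add_seven_eq_zero (m n : ℕ) :
    coeff (8 * n + 7) (1 - 2 * thetaTail R 1 - 2 * thetaTail R 2 +
      4 * (thetaTail R 1 ^ 2 + thetaTail R 1 * thetaTail R 2 + thetaTail R 2 ^ 2) -
      4 * (m : R⟦X⟧) * (thetaTail R 2 + thetaTail R 2 ^ 2)) = 0 := by
  have h1 : coeff (8 * n + 7) (thetaTail R 1) = 0 := coeff_thetaTail_eq_zero fun k hk =>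
    (sq_add_sq_ne_eight_mul_add_seven (k + 1) 0 n).1 (by simpa using hk.symm)
  have h2 : coeff (8 * n + 7) (thetaTail R 2) = 0 := coeff_thetaTail_eq_zero fun k hk => by omega
  have h11 : coeff (8 * n + 7) (thetaTail R 1 ^ 2) = 0 := by
    rw [sq]
    exact coeff_thetaTail_mul_thetaTail_eq_zero fun k l hkl =>
      (sq_add_sq_ne_eight_mul_add_seven (k + 1) (l + 1) n).1 (by simpa using hkl.symm)
  have h12 : coeff (8 * n + 7) (thetaTail R 1 * thetaTail R 2) = 0 :=
    coeff_thetaTail_mul_thetaTail_eq_zero fun k l hkl =>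
      (sq_add_sq_ne_eight_mul_add_seven (k + 1) (l + 1) n).2 (by simpa using hkl.symm)
  have h22 : coeff (8 * n + 7) (thetaTail R 2 ^ 2) = 0 := by
    rw [sq]
    exact coeff_thetaTail_mul_thetaTail_eq_zero fun k l hkl => by omega
  simp only [← map_ofNat (C (R := R)), ← map_natCast (C (R := R)), ← map_mul, map_add, map_sub,
    coeff_C_mul, coeff_one, h1, h2, h11, h12, h22]
  simp

theorem constantCoeff_qPochInf {h : ℕ} (hh : 0 < h) : constantCoeff (qPochInf R h) = 1 := by
  rw [← coeff_zero_eq_constantCoeff_apply]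
  simp [qPochInf, hh.ne']

theorem constantCoeff_thetaTail {h : ℕ} (hh : 0 < h) : constantCoeff (thetaTail R h) = 0 := by
  rw [← coeff_zero_eq_constantCoeff_apply]
  exact coeff_thetaTail_eq_zero fun k => (Nat.mul_pos hh (by positivity)).ne

theorem overcubic_mul_theta_eq_one {abar : ℕ → ℕ → ℕ} (habar : IsGenOvercubic abar) (m : ℕ) :
    (mk fun n => (abar (2 * m + 2) n : ℤ)) * (1 + 2 * thetaTail ℤ 1) *
      (1 + 2 * thetaTail ℤ 2) ^ (2 * m + 1) = 1 := by
  have hgen := habar (2 * m + 2) (by omega)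
  have hg1 : qPochInf ℤ 1 ^ 2 = qPochInf ℤ 2 * (1 + 2 * thetaTail ℤ 1) := qPochInf_sq one_pos
  have hg2 : qPochInf ℤ 2 ^ 2 = qPochInf ℤ 4 * (1 + 2 * thetaTail ℤ 2) := qPochInf_sq two_pos
  rw [show 2 * m + 2 - 1 = 2 * m + 1 by omega, pow_mul, hg2, hg1, mul_pow] at hgen
  have hK : qPochInf ℤ 2 * qPochInf ℤ 4 ^ (2 * m + 2) * (1 + 2 * thetaTail ℤ 2) ≠ 0 := by
    refine fun h0 => one_ne_zero (α := ℤ) ?_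
    simpa [constantCoeff_qPochInf, constantCoeff_thetaTail] using congrArg constantCoeff h0
  refine mul_left_cancel₀ hK ?_
  linear_combination hgen + qPochInf ℤ 4 ^ (2 * m + 1) * qPochInf ℤ 2 * hg2

end

/-- For all `m, n ≥ 0`, `a̅_{2m+2}(8n + 7) ≡ 0 (mod 8)`. -/
theorem overcubic_even_vanish_eight_n_seven (abar : ℕ → ℕ → ℕ)
    (habar : IsGenOvercubic abar) (m n : ℕ) :
    abar (2 * m + 2) (8 * n + 7) ≡ 0 [MOD 8] := by
  have h8 : (8 : (ZMod 8)⟦X⟧) = 0 := by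
    rw [← map_ofNat C 8, show (8 : ZMod 8) = 0 from rfl, map_zero]
  have hmod8 := congrArg (map (Int.castRingHom (ZMod 8))) (overcubic_mul_theta_eq_one habar m)
  simp only [map_mul, map_add, map_pow, map_one, map_ofNat, map_thetaTail] at hmod8
  have hcoeff := congrArg (coeff (8 * n + 7)) (eq_of_mul_one_add_two_mul_mul_pow h8 hmod8)
  rw [coeff_eight_mul_add_seven_eq_zero, coeff_map, coeff_mk] at hcoeff
  rw [← ZMod.natCast_eq_natCast_iff]
  simpa using hcoeff
end
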